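/- Let m be a positive integer and c, d complex numbers that are not integers. Then ((1-d)_m / (1-c)_m) · Σ_{k=0}^{m-1} (-1)^{m-k} (m-k-1)! (c-m)_k / ((d-m)_k · k!) = ((1-d)/(1-c)) · Σ_{j=0}^{m-1} (-1)^{j+1} (2-d)_j · j! / ((2-c)_j · (m-1-j)!). -/

import Mathlib

/-!
Reindex the left sum by `k = m - 1 - j`. Splitting `(1 - x)_m = (1 - x)_{j+1} (2 + j - x)_k` and
reflecting `(2 + j - x)_k = (-1)^k (x - m)_k`, the factors `(c - m)_k` and `(d - m)_k` cancel against
`(1 - c)_m` and `(1 - d)_m`, which leaves `(1 - x)_{j+1} = (1 - x) (2 - x)_j`: the two sums agree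
term by term.
-/

open Complex Finset

noncomputable def ψ (z : ℂ) : ℂ := deriv Complex.Gamma z / Complex.Gamma z

noncomputable def rf (x : ℂ) (n : ℕ) : ℂ := ∏ j ∈ Finset.range n, (x + j)

lemma rf_ne_zero {x : ℂ} (hx : ∀ n : ℤ, x ≠ n) (n : ℕ) : rf x n ≠ 0 :=
  prod_ne_zero_iff.mpr fun j _ h => hx (-j) (by push_cast; linear_combination h)

lemma rf_add (x : ℂ) (a b : ℕ) : rf x (a + b) = rf x a * rf (x + a) b := by
  rw [rf, prod_range_add]
  congr 1
  exact prod_congr rfl fun i _ => by push_cast; ring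

lemma rf_succ (x : ℂ) (n : ℕ) : rf x (n + 1) = x * rf (x + 1) n := by
  rw [add_comm n 1, rf_add]
  simp [rf]

lemma rf_neg (x : ℂ) (n : ℕ) : rf (-x) n = (-1) ^ n * rf (x - n + 1) n := by
  have hneg := prod_neg (s := range n) fun j : ℕ => x - n + 1 + j
  rw [card_range] at hneg
  rw [rf, rf, ← hneg, ← prod_range_reflect]
  refine prod_congr rfl fun j hj => ?_
  rw [mem_range] at hj
  rw [Nat.cast_sub (by omega), Nat.cast_sub (by omega)]
  push_cast
  ring

lemma rf_one_sub_add (x : ℂ) (a n : ℕ) :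
    rf (1 - x) (a + n) = rf (1 - x) a * ((-1) ^ n * rf (x - (a + n : ℕ)) n) := by
  have hreflect : rf (x - (a + n : ℕ)) n = (-1) ^ n * rf (1 - x + a) n := by
    rw [show x - (a + n : ℕ) = -((a + n : ℕ) - x) by ring, rf_neg]
    congr 2
    push_cast
    ring
  rw [rf_add, hreflect, ← mul_assoc ((-1 : ℂ) ^ n), ← mul_pow, neg_one_mul, neg_neg, one_pow, one_mul]

lemma sub_intCast_ne_intCast {x : ℂ} (hx : ∀ n : ℤ, x ≠ n) (a : ℤ) : ∀ n : ℤ, x - a ≠ n :=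
  fun n h => hx (n + a) (by push_cast; linear_combination h)

lemma intCast_sub_ne_intCast {x : ℂ} (hx : ∀ n : ℤ, x ≠ n) (a : ℤ) : ∀ n : ℤ, a - x ≠ n :=
  fun n h => hx (a - n) (by push_cast; linear_combination -h)

lemma rf_div_mul_summand_eq {c d : ℂ} (hc : ∀ n : ℤ, c ≠ n) (hd : ∀ n : ℤ, d ≠ n) (j n : ℕ) :
    rf (1 - d) (j + 1 + n) / rf (1 - c) (j + 1 + n) *
      ((-1 : ℂ) ^ (j + 1) * (j.factorial : ℂ) * rf (c - (j + 1 + n : ℕ)) n /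
        (rf (d - (j + 1 + n : ℕ)) n * (n.factorial : ℂ))) =
    (1 - d) / (1 - c) *
      ((-1 : ℂ) ^ (j + 1) * rf (2 - d) j * (j.factorial : ℂ) /
        (rf (2 - c) j * (n.factorial : ℂ))) := by
  have hc1 : 1 - c ≠ 0 := by simpa using intCast_sub_ne_intCast hc 1 0
  have hc2 := rf_ne_zero (intCast_sub_ne_intCast hc 2) j
  have hcm := rf_ne_zero (sub_intCast_ne_intCast hc (j + 1 + n : ℕ)) n
  have hdm := rf_ne_zero (sub_intCast_ne_intCast hd (j + 1 + n : ℕ)) n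
  simp only [Int.cast_natCast, Int.cast_ofNat] at hc2 hcm hdm
  rw [rf_one_sub_add c, rf_one_sub_add d, rf_succ, rf_succ,
    show (1 : ℂ) - c + 1 = 2 - c by ring, show (1 : ℂ) - d + 1 = 2 - d by ring]
  field_simp

theorem stmt7_general (m : ℕ) (c d : ℂ)
    (hc : ∀ n : ℤ, c ≠ n) (hd : ∀ n : ℤ, d ≠ n) :
    (rf (1 - d) m / rf (1 - c) m) *
      ∑ k ∈ Finset.range m, (-1 : ℂ) ^ (m - k) * (Nat.factorial (m - k - 1) : ℂ) *
        rf (c - m) k / (rf (d - m) k * (Nat.factorial k : ℂ)) =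
    ((1 - d) / (1 - c)) *
      ∑ j ∈ Finset.range m, (-1 : ℂ) ^ (j + 1) * rf (2 - d) j * (Nat.factorial j : ℂ) /
        (rf (2 - c) j * (Nat.factorial (m - 1 - j) : ℂ)) := by
  rw [mul_sum, mul_sum, ← sum_range_reflect]
  refine sum_congr rfl fun j hj => ?_
  obtain ⟨n, rfl⟩ : ∃ n, m = j + 1 + n := ⟨m - 1 - j, by simp at hj; omega⟩
  have hk : j + 1 + n - 1 - j = n := by omega
  have hmk : j + 1 + n - n = j + 1 := by omega
  simp only [hk, hmk, Nat.add_sub_cancel]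
  exact rf_div_mul_summand_eq hc hd j n

theorem stmt7 (m : ℕ) (hm : 1 ≤ m) (c d : ℂ)
    (hc : ∀ n : ℤ, c ≠ n) (hd : ∀ n : ℤ, d ≠ n) :
    (rf (1 - d) m / rf (1 - c) m) *
      ∑ k ∈ Finset.range m, (-1 : ℂ) ^ (m - k) * (Nat.factorial (m - k - 1) : ℂ) *
        rf (c - m) k / (rf (d - m) k * (Nat.factorial k : ℂ)) =
    ((1 - d) / (1 - c)) *
      ∑ j ∈ Finset.range m, (-1 : ℂ) ^ (j + 1) * rf (2 - d) j * (Nat.factorial j : ℂ) /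
        (rf (2 - c) j * (Nat.factorial (m - 1 - j) : ℂ)) :=
  stmt7_general m c d hc hd
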